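/- arXiv:1709.07876 — 3 statements merged into one kernel-verified Lean document; each statement's English description precedes it below -/
import Mathlib

section
/- Correctness of the multiplicative Viterbi recursion: for every time horizon t, the maximum over all state paths z : Fin (t+1) → S of the path weight W(z) equals the maximum over states i of the Viterbi value δ t i; that is, max_{z : Fin (t+1) → S} W(z) = max_{i ∈ S} δ t i. -/
/-!
By induction on `t`, `δ t i` is the largest weight of a path ending in state `i`: a path ending
in `i` at time `t + 1` is a path ending in some `j` at time `t` followed by the factor
`A j i * b (t + 1) i`, and since these factors are nonnegative, multiplying by them commutes with
taking maxima. Maximizing over the final state then gives the theorem.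
-/

open Finset

theorem Finset.sup'_univ_fin_snoc {α S : Type*} [SemilatticeSup α] [Fintype S] [Nonempty S]
    {n : ℕ} (f : (Fin (n + 1) → S) → α) :
    univ.sup' univ_nonempty f =
      univ.sup' univ_nonempty fun i => univ.sup' univ_nonempty fun z : Fin n → S =>
        f (Fin.snoc z i) :=
  eq_of_forall_ge_iff fun a => by
    simp only [sup'_le_iff, mem_univ, true_implies]
    exact ⟨fun h i z => h _, fun h z => Fin.snoc_init_self z ▸ h _ _⟩

def pathWeight {S : Type*} (π : S → ℝ) (A : S → S → ℝ) (b : ℕ → S → ℝ) (t : ℕ)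
    (z : Fin (t + 1) → S) : ℝ :=
  π (z 0) * b 0 (z 0) * ∏ k : Fin t, (A (z k.castSucc) (z k.succ) * b ((k : ℕ) + 1) (z k.succ))

theorem pathWeight_snoc {S : Type*} (π : S → ℝ) (A : S → S → ℝ) (b : ℕ → S → ℝ) {t : ℕ}
    (z : Fin (t + 1) → S) (i : S) :
    pathWeight π A b (t + 1) (Fin.snoc z i) =
      pathWeight π A b t z * (A (z (Fin.last t)) i * b (t + 1) i) := by
  rw [pathWeight, pathWeight, Fin.prod_univ_castSucc, ← Fin.castSucc_zero, Fin.snoc_castSucc]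
  simp only [Fin.snoc_castSucc, ← Fin.castSucc_succ, Fin.succ_last, Fin.snoc_last,
    Fin.val_castSucc, Fin.val_last]
  ring

theorem viterbi_eq_sup'_pathWeight {S : Type*} [Fintype S] [Nonempty S]
    (π : S → ℝ) (A : S → S → ℝ) (b : ℕ → S → ℝ)
    (hA : ∀ j i, 0 ≤ A j i) (hb : ∀ t i, 0 ≤ b t i)
    (δ : ℕ → S → ℝ)
    (hδ0 : ∀ i, δ 0 i = π i * b 0 i)
    (hδsucc : ∀ t i, δ (t + 1) i =
      b (t + 1) i * (univ.sup' univ_nonempty fun j => A j i * δ t j))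
    (t : ℕ) (i : S) :
    δ t i = univ.sup' univ_nonempty fun z : Fin t → S => pathWeight π A b t (Fin.snoc z i) := by
  induction t generalizing i with
  | zero => simp [pathWeight, hδ0, Fin.snoc_zero]
  | succ t ih =>
    calc δ (t + 1) i
        = univ.sup' univ_nonempty fun j => univ.sup' univ_nonempty fun z : Fin t → S =>
            pathWeight π A b t (Fin.snoc z j) * (A j i * b (t + 1) i) := by
          simp only [hδsucc, ih, mul₀_sup' (hb _ _), mul₀_sup' (hA _ _)]
          congr 1; funext j; congr 1; funext z
          ring
      _ = _ := by
          rw [sup'_univ_fin_snoc fun y : Fin (t + 1) → S =>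
            pathWeight π A b (t + 1) (Fin.snoc y i)]
          simp only [pathWeight_snoc, Fin.snoc_last]

theorem viterbi_max_recursion_correct_general
    {S : Type*} [Fintype S] [Nonempty S]
    (π : S → ℝ) (A : S → S → ℝ) (b : ℕ → S → ℝ)
    (hA : ∀ j i, 0 ≤ A j i) (hb : ∀ t i, 0 ≤ b t i)
    (δ : ℕ → S → ℝ)
    (hδ0 : ∀ i, δ 0 i = π i * b 0 i)
    (hδsucc : ∀ t i, δ (t + 1) i =
      b (t + 1) i * (Finset.univ.sup' Finset.univ_nonempty fun j => A j i * δ t j))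
    (t : ℕ) :
    (Finset.univ.sup' Finset.univ_nonempty fun z : Fin (t + 1) → S =>
        π (z 0) * b 0 (z 0) *
          ∏ k : Fin t, (A (z k.castSucc) (z k.succ) * b ((k : ℕ) + 1) (z k.succ)))
      = Finset.univ.sup' Finset.univ_nonempty fun i => δ t i := by
  change univ.sup' univ_nonempty (pathWeight π A b t) = _
  rw [sup'_univ_fin_snoc]
  simp only [viterbi_eq_sup'_pathWeight π A b hA hb δ hδ0 hδsucc t]

/-- Correctness of the multiplicative Viterbi recursion: the maximum over all state paths
`z : Fin (t+1) → S` of the path weight equals the maximum over states of the Viterbi value. -/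
theorem viterbi_max_recursion_correct
    {S : Type*} [Fintype S] [Nonempty S]
    (π : S → ℝ) (A : S → S → ℝ) (b : ℕ → S → ℝ)
    (hπ : ∀ i, 0 ≤ π i) (hA : ∀ j i, 0 ≤ A j i) (hb : ∀ t i, 0 ≤ b t i)
    (δ : ℕ → S → ℝ)
    (hδ0 : ∀ i, δ 0 i = π i * b 0 i)
    (hδsucc : ∀ t i, δ (t + 1) i =
      b (t + 1) i * (Finset.univ.sup' Finset.univ_nonempty fun j => A j i * δ t j))
    (t : ℕ) :
    (Finset.univ.sup' Finset.univ_nonempty fun z : Fin (t + 1) → S =>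
        π (z 0) * b 0 (z 0) *
          ∏ k : Fin t, (A (z k.castSucc) (z k.succ) * b ((k : ℕ) + 1) (z k.succ)))
      = Finset.univ.sup' Finset.univ_nonempty fun i => δ t i :=
  viterbi_max_recursion_correct_general π A b hA hb δ hδ0 hδsucc t
end

section
/- Multiplicative sandwich between the forward values and the Viterbi values, quantifying the accumulated error of the max-approximation: for every time t and every state i, δ t i ≤ α t i ≤ N^t · δ t i, where N = card S. -/
/-- Multiplicative sandwich between the forward values and the Viterbi values: for every time `t`
and state `i`, `δ t i ≤ α t i ≤ N^t * δ t i`, where `N = card S`. -/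
theorem forward_viterbi_sandwich
    {S : Type*} [Fintype S] [Nonempty S]
    (π : S → ℝ) (A : S → S → ℝ) (b : ℕ → S → ℝ)
    (hπ : ∀ i, 0 ≤ π i) (hA : ∀ j i, 0 ≤ A j i) (hb : ∀ t i, 0 ≤ b t i)
    (α δ : ℕ → S → ℝ)
    (hα0 : ∀ i, α 0 i = π i * b 0 i)
    (hαsucc : ∀ t i, α (t + 1) i = b (t + 1) i * ∑ j, α t j * A j i)
    (hδ0 : ∀ i, δ 0 i = π i * b 0 i)
    (hδsucc : ∀ t i, δ (t + 1) i =
      b (t + 1) i * (Finset.univ.sup' Finset.univ_nonempty fun j => A j i * δ t j))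
    (t : ℕ) (i : S) :
    δ t i ≤ α t i ∧ α t i ≤ (Fintype.card S : ℝ) ^ t * δ t i := by
  suffices h : ∀ t i, 0 ≤ δ t i ∧ δ t i ≤ α t i ∧ α t i ≤ (Fintype.card S : ℝ) ^ t * δ t i from
    ⟨(h t i).2.1, (h t i).2.2⟩
  intro t
  induction t with
  | zero =>
    intro i
    rw [hα0, hδ0]
    exact ⟨mul_nonneg (hπ i) (hb 0 i), le_refl _, by simp⟩
  | succ t ih =>
    intro i
    set M := Finset.univ.sup' Finset.univ_nonempty fun j => A j i * δ t j with hM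
    have hMnn : 0 ≤ M := by
      obtain ⟨j⟩ := ‹Nonempty S›
      refine le_trans (mul_nonneg (hA j i) (ih j).1) ?_
      rw [hM]
      exact Finset.le_sup' (fun j => A j i * δ t j) (Finset.mem_univ j)
    have hterm : ∀ j : S, A j i * δ t j ≤ M := fun j => by
      rw [hM]
      exact Finset.le_sup' (fun j => A j i * δ t j) (Finset.mem_univ j)
    refine ⟨?_, ?_, ?_⟩
    · rw [hδsucc]; exact mul_nonneg (hb _ i) hMnn
    · rw [hδsucc, hαsucc]
      refine mul_le_mul_of_nonneg_left ?_ (hb _ i)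
      refine Finset.sup'_le _ _ (fun j _ => ?_)
      calc A j i * δ t j ≤ A j i * α t j :=
            mul_le_mul_of_nonneg_left (ih j).2.1 (hA j i)
        _ = α t j * A j i := mul_comm _ _
        _ ≤ ∑ k, α t k * A k i :=
            Finset.single_le_sum (fun k _ =>
              mul_nonneg (le_trans (ih k).1 (ih k).2.1) (hA k i)) (Finset.mem_univ j)
    · rw [hδsucc, hαsucc, pow_succ]
      have hsum : ∑ j, α t j * A j i ≤ (Fintype.card S : ℝ) * ((Fintype.card S : ℝ) ^ t * M) := by
        calc ∑ j, α t j * A j i ≤ ∑ _j : S, (Fintype.card S : ℝ) ^ t * M := by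
              refine Finset.sum_le_sum (fun j _ => ?_)
              calc α t j * A j i ≤ ((Fintype.card S : ℝ) ^ t * δ t j) * A j i :=
                    mul_le_mul_of_nonneg_right (ih j).2.2 (hA j i)
                _ = (Fintype.card S : ℝ) ^ t * (A j i * δ t j) := by ring
                _ ≤ (Fintype.card S : ℝ) ^ t * M :=
                    mul_le_mul_of_nonneg_left (hterm j) (by positivity)
          _ = (Fintype.card S : ℝ) * ((Fintype.card S : ℝ) ^ t * M) := by
              simp [Finset.sum_const, Finset.card_univ, mul_comm]
      calc b (t + 1) i * ∑ j, α t j * A j i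
          ≤ b (t + 1) i * ((Fintype.card S : ℝ) * ((Fintype.card S : ℝ) ^ t * M)) :=
            mul_le_mul_of_nonneg_left hsum (hb _ i)
        _ = (Fintype.card S : ℝ) ^ t * (Fintype.card S : ℝ) * (b (t + 1) i * M) := by ring
end

section
/- Characterization of a Viterbi sequence break by the ratio inequalities (Eqtns. 14–15 of the paper): let δ_l > δ_k > 0 and let w_ll, w_lk, w_kl, w_kk > 0 with w_kl ≤ w_ll, and set δ'_l = max (δ_l · w_ll, δ_k · w_kl) and δ'_k = max (δ_l · w_lk, δ_k · w_kk). Then the sequence-break condition, namely (δ_k · w_kk > δ_l · w_lk) ∧ (δ'_k > δ'_l), holds if and only if w_kk / w_lk > δ_l / δ_k and w_kk / w_ll > δ_l / δ_k. -/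
/-- Characterization of a Viterbi sequence break by the ratio inequalities: with `δ_l > δ_k > 0`,
positive weights, and `w_kl ≤ w_ll`, the sequence-break condition
`(δ_k·w_kk > δ_l·w_lk) ∧ (δ'_k > δ'_l)` holds iff `w_kk/w_lk > δ_l/δ_k` and `w_kk/w_ll > δ_l/δ_k`,
where `δ'_l = max (δ_l·w_ll) (δ_k·w_kl)` and `δ'_k = max (δ_l·w_lk) (δ_k·w_kk)`. -/
theorem viterbi_sequence_break_iff_ratios
    (δl δk wll wlk wkl wkk : ℝ)
    (hδ : δk < δl) (hδk : 0 < δk)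
    (hwll : 0 < wll) (hwlk : 0 < wlk) (hwkl : 0 < wkl) (hwkk : 0 < wkk)
    (hdom : wkl ≤ wll) :
    (δk * wkk > δl * wlk ∧
        max (δl * wlk) (δk * wkk) > max (δl * wll) (δk * wkl))
      ↔ (wkk / wlk > δl / δk ∧ wkk / wll > δl / δk) := by
  have hδl : 0 < δl := hδk.trans hδ
  have hmaxl : max (δl * wll) (δk * wkl) = δl * wll := by
    apply max_eq_left
    calc δk * wkl ≤ δl * wkl := by nlinarith
      _ ≤ δl * wll := by nlinarith
  have h1 : δl / δk < wkk / wlk ↔ δl * wlk < δk * wkk := by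
    rw [div_lt_div_iff₀ hδk hwlk]; constructor <;> intro h <;> nlinarith
  have h2 : δl / δk < wkk / wll ↔ δl * wll < δk * wkk := by
    rw [div_lt_div_iff₀ hδk hwll]; constructor <;> intro h <;> nlinarith
  rw [hmaxl]
  constructor
  · rintro ⟨ha, hb⟩
    have hmaxr : max (δl * wlk) (δk * wkk) = δk * wkk := max_eq_right ha.le
    rw [hmaxr] at hb
    exact ⟨h1.mpr ha, h2.mpr hb⟩
  · rintro ⟨ha, hb⟩
    have ha' := h1.mp ha
    have hb' := h2.mp hb
    refine ⟨ha', ?_⟩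
    rw [max_eq_right ha'.le]
    exact hb'
end
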